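/- Let t > 0 and let f : ℝ → ℝ be eight times continuously differentiable with bounded eighth derivative. Set b_1(t) = (t²/2) f''(t), b_2(t) = (t⁴/8) f⁽⁴⁾(t) + (t³/3) f⁽³⁾(t), and b_3(t) = (t⁶/48) f⁽⁶⁾(t) + (t⁵/6) f⁽⁵⁾(t) + (t⁴/4) f⁽⁴⁾(t). Then lim_{n→∞} n⁴ · ( ∫ f(x) dΓ(n, n/t)(x) − f(t) − b_1(t)/n − b_2(t)/n² − b_3(t)/n³ ) = (t⁸/384) f⁽⁸⁾(t) + (t⁷/24) f⁽⁷⁾(t) + (13 t⁶/72) f⁽⁶⁾(t) + (t⁵/5) f⁽⁵⁾(t). -/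

import Mathlib

/-!
Expand `f` to order eight around `t`. Under `Γ(n, n/t)` the `k`-th central moment is `t ^ k`
times a polynomial in `1/n` (`gammaCentralMoment`), so integrating the Taylor polynomial gives
`f t + b₁/n + b₂/n² + b₃/n³ + c/n⁴ + O(n⁻⁵)` by pure algebra. By Taylor–Peano near `t` and by the
Lagrange form with the bounded `f⁽⁸⁾` far from `t`, the remainder is at most
`ε (x - t)^8 + c_ε (x - t)^10` for every `ε > 0`; since the eighth and tenth central moments are
`O(n⁻⁴)` and `O(n⁻⁵)`, it contributes `o(n⁻⁴)`.
-/

open MeasureTheory ProbabilityTheory Filter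
open Real Set Finset
open scoped Nat Topology

lemma taylorWithinEval_eq_univ {E : Type*} [NormedAddCommGroup E] [NormedSpace ℝ E]
    {f : ℝ → E} {n : ℕ} (hf : ContDiff ℝ n f) {s : Set ℝ} (hs : UniqueDiffOn ℝ s) {x₀ : ℝ}
    (hx₀ : x₀ ∈ s) (x : ℝ) :
    taylorWithinEval f n s x₀ x = taylorWithinEval f n univ x₀ x := by
  simp only [taylor_within_apply, iteratedDerivWithin_univ]
  refine sum_congr rfl fun k hk => ?_
  rw [iteratedDerivWithin_eq_iteratedDeriv hs (hf.of_le ?_).contDiffAt hx₀]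
  exact_mod_cast Nat.lt_succ_iff.1 (mem_range.1 hk)

lemma abs_sub_taylorWithinEval_le {f : ℝ → ℝ} {n : ℕ} (hf : ContDiff ℝ (n + 1) f) {M : ℝ}
    (hM : ∀ x, |iteratedDeriv (n + 1) f x| ≤ M) (x₀ x : ℝ) :
    |f x - taylorWithinEval f (n + 1) univ x₀ x| ≤ 2 * M / (n + 1)! * |x - x₀| ^ (n + 1) := by
  have hM0 : 0 ≤ M := (abs_nonneg _).trans (hM x₀)
  rcases eq_or_ne x₀ x with rfl | hx
  · simp only [taylorWithinEval_self, sub_self, abs_zero]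
    positivity
  obtain ⟨ξ, -, hξ⟩ := taylor_mean_remainder_lagrange_iteratedDeriv hx hf.contDiffOn
  rw [taylorWithinEval_eq_univ (hf.of_le (by norm_cast; omega)) (uniqueDiffOn_uIcc hx)
    left_mem_uIcc] at hξ
  have hremainder : f x - taylorWithinEval f (n + 1) univ x₀ x =
      (iteratedDeriv (n + 1) f ξ - iteratedDeriv (n + 1) f x₀) * (x - x₀) ^ (n + 1) / (n + 1)! := by
    rw [taylorWithinEval_succ, iteratedDerivWithin_univ, smul_eq_mul]
    rw [Nat.factorial_succ] at hξ ⊢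
    push_cast at hξ ⊢
    field_simp at hξ ⊢
    linear_combination hξ
  have hderiv : |iteratedDeriv (n + 1) f ξ - iteratedDeriv (n + 1) f x₀| ≤ 2 * M := by
    linarith [abs_sub (iteratedDeriv (n + 1) f ξ) (iteratedDeriv (n + 1) f x₀), hM ξ, hM x₀]
  rw [hremainder, abs_div, abs_mul, abs_pow, Nat.abs_cast, div_mul_eq_mul_div]
  gcongr

lemma exists_abs_sub_taylorWithinEval_le {f : ℝ → ℝ} {n : ℕ} (hf : ContDiff ℝ (n + 1) f)
    {M : ℝ} (hM : ∀ x, |iteratedDeriv (n + 1) f x| ≤ M) (x₀ : ℝ) {ε : ℝ} (hε : 0 < ε) :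
    ∃ c, ∀ x, |f x - taylorWithinEval f (n + 1) univ x₀ x| ≤
      ε * |x - x₀| ^ (n + 1) + c * |x - x₀| ^ (n + 3) := by
  have hM0 : 0 ≤ M := (abs_nonneg _).trans (hM x₀)
  obtain ⟨δ, hδ, hnear⟩ := Metric.eventually_nhds_iff.1
    ((taylor_isLittleO_univ (n := n + 1) (by exact_mod_cast hf)).def hε)
  refine ⟨2 * M / (n + 1)! / δ ^ 2, fun x => ?_⟩
  rcases lt_or_ge |x - x₀| δ with hx | hx
  · have hlocal := hnear (by rwa [Real.dist_eq])
    simp only [Real.norm_eq_abs, abs_pow] at hlocal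
    have : 0 ≤ 2 * M / (n + 1)! / δ ^ 2 * |x - x₀| ^ (n + 3) := by positivity
    linarith
  · calc |f x - taylorWithinEval f (n + 1) univ x₀ x|
        ≤ 2 * M / (n + 1)! * |x - x₀| ^ (n + 1) := abs_sub_taylorWithinEval_le hf hM x₀ x
      _ ≤ 2 * M / (n + 1)! * |x - x₀| ^ (n + 1) * (|x - x₀| / δ) ^ 2 :=
        le_mul_of_one_le_right (by positivity) (one_le_pow₀ ((one_le_div hδ).2 hx))
      _ = 2 * M / (n + 1)! / δ ^ 2 * |x - x₀| ^ (n + 3) := by ring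
      _ ≤ ε * |x - x₀| ^ (n + 1) + 2 * M / (n + 1)! / δ ^ 2 * |x - x₀| ^ (n + 3) :=
        le_add_of_nonneg_left (by positivity)

lemma tendsto_natCast_pow_mul_inv {j : ℕ} {P Q : ℝ → ℝ} {L : ℝ} (hPQ : ∀ u, P u = u ^ j * Q u)
    (hQ : Tendsto Q (𝓝 0) (𝓝 L)) :
    Tendsto (fun n : ℕ => (n : ℝ) ^ j * P (n : ℝ)⁻¹) atTop (𝓝 L) := by
  refine (hQ.comp tendsto_inv_atTop_nhds_zero_nat).congr' ?_
  filter_upwards [eventually_ne_atTop 0] with n hn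
  have : (n : ℝ) ≠ 0 := by exact_mod_cast hn
  simp [hPQ, this]

lemma tendsto_mul_integral_of_abs_le {α ι : Type*} [MeasurableSpace α] {l : Filter ι}
    {μ : ι → Measure α} {s : ι → ℝ} {g p q : α → ℝ} {P : ℝ}
    (hg : ∀ᶠ i in l, Integrable g (μ i)) (hp : ∀ᶠ i in l, Integrable p (μ i))
    (hq : ∀ᶠ i in l, Integrable q (μ i)) (hs : ∀ᶠ i in l, 0 ≤ s i)
    (hbound : ∀ ε > 0, ∃ c, ∀ x, |g x| ≤ ε * p x + c * q x)
    (hP : Tendsto (fun i => s i * ∫ x, p x ∂μ i) l (𝓝 P))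
    (hQ : Tendsto (fun i => s i * ∫ x, q x ∂μ i) l (𝓝 0)) :
    Tendsto (fun i => s i * ∫ x, g x ∂μ i) l (𝓝 0) := by
  rw [Metric.tendsto_nhds]
  intro δ hδ
  set ε := δ / (2 * (|P| + 1))
  obtain ⟨c, hc⟩ := hbound ε (by positivity)
  have hP' : ∀ᶠ i in l, s i * ∫ x, p x ∂μ i < |P| + 1 :=
    hP.eventually (gt_mem_nhds (by linarith [le_abs_self P]))
  have hQ' : ∀ᶠ i in l, c * (s i * ∫ x, q x ∂μ i) < δ / 2 :=
    (hQ.const_mul c).eventually (gt_mem_nhds (by rw [mul_zero]; positivity))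
  filter_upwards [hg, hp, hq, hs, hP', hQ'] with i hgi hpi hqi hsi hPi hQi
  have hint : |∫ x, g x ∂μ i| ≤ ε * ∫ x, p x ∂μ i + c * ∫ x, q x ∂μ i := by
    calc |∫ x, g x ∂μ i| ≤ ∫ x, |g x| ∂μ i := abs_integral_le_integral_abs
      _ ≤ ∫ x, (ε * p x + c * q x) ∂μ i :=
        integral_mono hgi.abs ((hpi.const_mul _).add (hqi.const_mul _)) hc
      _ = ε * ∫ x, p x ∂μ i + c * ∫ x, q x ∂μ i := by
        rw [integral_add (hpi.const_mul _) (hqi.const_mul _), integral_const_mul,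
          integral_const_mul]
  rw [Real.dist_eq, sub_zero, abs_mul, abs_of_nonneg hsi]
  calc s i * |∫ x, g x ∂μ i| ≤ s i * (ε * ∫ x, p x ∂μ i + c * ∫ x, q x ∂μ i) :=
        mul_le_mul_of_nonneg_left hint hsi
    _ = ε * (s i * ∫ x, p x ∂μ i) + c * (s i * ∫ x, q x ∂μ i) := by ring
    _ < ε * (|P| + 1) + δ / 2 :=
        add_lt_add_of_le_of_lt (mul_le_mul_of_nonneg_left hPi.le (by positivity)) hQi
    _ = δ := by simp only [ε]; field_simp; ring

lemma Real.Gamma_add_nat_eq_prod_mul {a : ℝ} (ha : 0 < a) (k : ℕ) :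
    Gamma (a + k) = (∏ i ∈ range k, (a + i)) * Gamma a := by
  induction k with
  | zero => simp
  | succ k ih =>
    rw [Nat.cast_succ, ← add_assoc, Gamma_add_one (by positivity), ih, prod_range_succ]
    ring

namespace ProbabilityTheory

variable {E : Type*} [NormedAddCommGroup E] [NormedSpace ℝ E] {a r : ℝ}

lemma integral_gammaMeasure_eq (ha : 0 < a) (hr : 0 < r) (g : ℝ → E) :
    ∫ x, g x ∂gammaMeasure a r = ∫ x, gammaPDFReal a r x • g x := by
  rw [gammaMeasure, integral_withDensity_eq_integral_toReal_smul (f := gammaPDF a r)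
    (measurable_gammaPDFReal a r).ennreal_ofReal (ae_of_all _ fun _ => ENNReal.ofReal_lt_top)]
  simp_rw [gammaPDF, ENNReal.toReal_ofReal (gammaPDFReal_nonneg ha hr _)]

lemma integrable_gammaMeasure_iff (ha : 0 < a) (hr : 0 < r) {g : ℝ → E} :
    Integrable g (gammaMeasure a r) ↔ Integrable fun x => gammaPDFReal a r x • g x := by
  rw [gammaMeasure, integrable_withDensity_iff_integrable_smul' (f := gammaPDF a r)
    (measurable_gammaPDFReal a r).ennreal_ofReal (ae_of_all _ fun _ => ENNReal.ofReal_lt_top)]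
  simp_rw [gammaPDF, ENNReal.toReal_ofReal (gammaPDFReal_nonneg ha hr _)]

lemma gammaPDFReal_mul_pow (ha : 0 < a) (hr : 0 < r) (k : ℕ) (x : ℝ) :
    gammaPDFReal a r x * x ^ k = (∏ i ∈ range k, (a + i)) / r ^ k * gammaPDFReal (a + k) r x := by
  unfold gammaPDFReal
  split_ifs with hx
  · have hpow : x ^ (a + k - 1) = x ^ (a - 1) * x ^ k := by
      rcases k.eq_zero_or_pos with rfl | hk
      · simp
      · have : (1 : ℝ) ≤ k := by exact_mod_cast hk
        rw [← rpow_add_natCast' hx (by linarith)]; ring_nf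
    rw [hpow, rpow_add_natCast hr.ne', Gamma_add_nat_eq_prod_mul ha]
    have : Gamma a ≠ 0 := (Gamma_pos_of_pos ha).ne'
    have : ∏ i ∈ range k, (a + i) ≠ 0 := prod_ne_zero_iff.2 fun i _ => by positivity
    field_simp
  · simp

lemma integrable_pow_gammaMeasure (ha : 0 < a) (hr : 0 < r) (k : ℕ) :
    Integrable (fun x => x ^ k) (gammaMeasure a r) := by
  have := isProbabilityMeasure_gammaMeasure (a := a + k) (by positivity) hr
  rw [integrable_gammaMeasure_iff ha hr]
  simp_rw [smul_eq_mul, gammaPDFReal_mul_pow ha hr]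
  have hpdf := (integrable_gammaMeasure_iff (a := a + k) (by positivity) hr).1
    (integrable_const (1 : ℝ))
  simp only [smul_eq_mul, mul_one] at hpdf
  exact hpdf.const_mul _

lemma integral_pow_gammaMeasure (ha : 0 < a) (hr : 0 < r) (k : ℕ) :
    ∫ x, x ^ k ∂gammaMeasure a r = (∏ i ∈ range k, (a + i)) / r ^ k := by
  have := isProbabilityMeasure_gammaMeasure (a := a + k) (by positivity) hr
  have hpdf := integral_gammaMeasure_eq (a := a + k) (by positivity) hr fun _ => (1 : ℝ)
  simp only [integral_const, probReal_univ, smul_eq_mul, mul_one] at hpdf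
  simp_rw [integral_gammaMeasure_eq ha hr, smul_eq_mul, gammaPDFReal_mul_pow ha hr,
    integral_const_mul, ← hpdf, mul_one]

lemma integrable_sub_pow_gammaMeasure (ha : 0 < a) (hr : 0 < r) (t : ℝ) (k : ℕ) :
    Integrable (fun x => (x - t) ^ k) (gammaMeasure a r) := by
  simp_rw [sub_eq_add_neg, add_pow]
  exact integrable_finsetSum _ fun m _ =>
    ((integrable_pow_gammaMeasure ha hr m).mul_const _).mul_const _

lemma integral_sub_pow_gammaMeasure (ha : 0 < a) (hr : 0 < r) (t : ℝ) (k : ℕ) :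
    ∫ x, (x - t) ^ k ∂gammaMeasure a r =
      ∑ m ∈ range (k + 1), (∏ i ∈ range m, (a + i)) / r ^ m * (-t) ^ (k - m) * k.choose m := by
  simp_rw [sub_eq_add_neg, add_pow]
  rw [integral_finsetSum _ fun m _ =>
    ((integrable_pow_gammaMeasure ha hr m).mul_const _).mul_const _]
  simp_rw [integral_mul_const, integral_pow_gammaMeasure ha hr]

lemma integrable_taylorWithinEval_gammaMeasure (ha : 0 < a) (hr : 0 < r) (f : ℝ → ℝ)
    (n : ℕ) (s : Set ℝ) (x₀ : ℝ) :
    Integrable (taylorWithinEval f n s x₀) (gammaMeasure a r) := by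
  simp_rw [funext (taylor_within_apply f n s x₀), smul_eq_mul]
  exact integrable_finsetSum _ fun k _ =>
    ((integrable_sub_pow_gammaMeasure ha hr x₀ k).const_mul _).mul_const _

lemma integrable_sub_taylorWithinEval_gammaMeasure {f : ℝ → ℝ} {n : ℕ}
    (hf : ContDiff ℝ (n + 1) f) {M : ℝ} (hM : ∀ x, |iteratedDeriv (n + 1) f x| ≤ M)
    (ha : 0 < a) (hr : 0 < r) (x₀ : ℝ) :
    Integrable (fun x => f x - taylorWithinEval f (n + 1) univ x₀ x) (gammaMeasure a r) := by
  obtain ⟨c, hc⟩ := exists_abs_sub_taylorWithinEval_le hf hM x₀ one_pos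
  have hpow : ∀ k, Integrable (fun x => |x - x₀| ^ k) (gammaMeasure a r) := fun k => by
    simpa only [abs_pow] using (integrable_sub_pow_gammaMeasure ha hr x₀ k).abs
  exact (((hpow _).const_mul 1).add ((hpow _).const_mul c)).mono'
    (hf.continuous.aestronglyMeasurable.sub
      (integrable_taylorWithinEval_gammaMeasure ha hr f _ _ x₀).aestronglyMeasurable)
    (ae_of_all _ hc)

end ProbabilityTheory

/-- The `k`-th central moment of `Γ(1/u, 1/u)`, which has mean `1` and variance `u`. -/
def gammaCentralMoment (k : ℕ) (u : ℝ) : ℝ :=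
  ∑ m ∈ range (k + 1), (∏ i ∈ range m, (1 + i * u)) * (-1) ^ (k - m) * k.choose m

lemma integral_sub_pow_gammaMeasure_div {a t : ℝ} (ha : 0 < a) (ht : 0 < t) (k : ℕ) :
    ∫ x, (x - t) ^ k ∂gammaMeasure a (a / t) = t ^ k * gammaCentralMoment k a⁻¹ := by
  rw [integral_sub_pow_gammaMeasure ha (by positivity), gammaCentralMoment, mul_sum]
  refine sum_congr rfl fun m hm => ?_
  have hmk : m + (k - m) = k := Nat.add_sub_cancel' (Nat.lt_succ_iff.1 (mem_range.1 hm))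
  have hprod : ∏ i ∈ range m, (a + i) = a ^ m * ∏ i ∈ range m, (1 + i * a⁻¹) := by
    rw [← card_range m, ← prod_const, card_range, ← prod_mul_distrib]
    exact prod_congr rfl fun i _ => by field_simp
  rw [hprod, neg_pow, div_pow, ← hmk, pow_add, Nat.add_sub_cancel_left]
  field_simp

lemma gammaCentralMoment_eight (u : ℝ) :
    gammaCentralMoment 8 u = u ^ 4 * (105 + 2380 * u + 7308 * u ^ 2 + 5040 * u ^ 3) := by
  simp only [gammaCentralMoment, sum_range_succ, sum_range_zero, prod_range_succ, prod_range_zero,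
    Nat.reduceAdd, Nat.reduceSub, Nat.choose]
  push_cast
  ring

lemma gammaCentralMoment_ten (u : ℝ) :
    gammaCentralMoment 10 u =
      u ^ 4 * (u * (945 + 44100 * u + 303660 * u ^ 2 + 623376 * u ^ 3 + 362880 * u ^ 4)) := by
  simp only [gammaCentralMoment, sum_range_succ, sum_range_zero, prod_range_succ, prod_range_zero,
    Nat.reduceAdd, Nat.reduceSub, Nat.choose]
  push_cast
  ring

lemma integral_taylorWithinEval_gammaMeasure_div {a t : ℝ} (ha : 0 < a) (ht : 0 < t)
    (f : ℝ → ℝ) (n : ℕ) :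
    ∫ x, taylorWithinEval f n univ t x ∂gammaMeasure a (a / t) =
      ∑ k ∈ range (n + 1), iteratedDeriv k f t / k ! * (t ^ k * gammaCentralMoment k a⁻¹) := by
  simp_rw [taylor_within_apply, iteratedDerivWithin_univ, smul_eq_mul]
  rw [integral_finsetSum _ fun k _ =>
    ((integrable_sub_pow_gammaMeasure ha (by positivity) t k).const_mul _).mul_const _]
  refine sum_congr rfl fun k _ => ?_
  rw [integral_mul_const, integral_const_mul, integral_sub_pow_gammaMeasure_div ha ht]
  ring

lemma tendsto_pow_mul_integral_sub_pow_gammaMeasure {t L : ℝ} (ht : 0 < t) {j k : ℕ}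
    {Q : ℝ → ℝ} (hQ_eq : ∀ u, gammaCentralMoment k u = u ^ j * Q u)
    (hQ : Tendsto Q (𝓝 0) (𝓝 L)) :
    Tendsto (fun n : ℕ => (n : ℝ) ^ j * ∫ x, (x - t) ^ k ∂gammaMeasure n (n / t)) atTop
      (𝓝 (t ^ k * L)) := by
  refine (tendsto_natCast_pow_mul_inv (j := j) (P := fun u => t ^ k * gammaCentralMoment k u)
    (fun u => by rw [hQ_eq]; ring) (hQ.const_mul (t ^ k))).congr' ?_
  filter_upwards [eventually_gt_atTop 0] with n hn
  rw [integral_sub_pow_gammaMeasure_div (Nat.cast_pos.2 hn) ht]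

lemma sum_taylor_mul_gammaCentralMoment_eight (d : ℕ → ℝ) (t u : ℝ) :
    ∑ k ∈ range 9, d k / k ! * (t ^ k * gammaCentralMoment k u) - d 0 - t ^ 2 / 2 * d 2 * u -
        (t ^ 4 / 8 * d 4 + t ^ 3 / 3 * d 3) * u ^ 2 -
        (t ^ 6 / 48 * d 6 + t ^ 5 / 6 * d 5 + t ^ 4 / 4 * d 4) * u ^ 3 =
      u ^ 4 * (t ^ 8 / 384 * d 8 + t ^ 7 / 24 * d 7 + 13 * t ^ 6 / 72 * d 6 + t ^ 5 / 5 * d 5 +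
        u * (t ^ 6 / 6 * d 6 + t ^ 7 * d 7 * (11 / 60 + u / 7) +
          t ^ 8 * d 8 * (17 / 288 + 29 / 160 * u + u ^ 2 / 8))) := by
  simp only [gammaCentralMoment, sum_range_succ, sum_range_zero, prod_range_succ, prod_range_zero,
    Nat.reduceAdd, Nat.reduceSub, Nat.choose, Nat.factorial]
  push_cast
  ring

lemma tendsto_pow_mul_integral_sub_taylorWithinEval_eight {f : ℝ → ℝ} {t M : ℝ} (ht : 0 < t)
    (hf : ContDiff ℝ 8 f) (hM : ∀ x, |iteratedDeriv 8 f x| ≤ M) :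
    Tendsto (fun n : ℕ => (n : ℝ) ^ 4 *
      ∫ x, f x - taylorWithinEval f 8 univ t x ∂gammaMeasure n (n / t)) atTop (𝓝 0) := by
  have hpos : ∀ᶠ n : ℕ in atTop, (0 : ℝ) < n :=
    tendsto_natCast_atTop_atTop.eventually_gt_atTop 0
  have hint : ∀ k, ∀ᶠ n : ℕ in atTop,
      Integrable (fun x => (x - t) ^ k) (gammaMeasure n (n / t)) := fun k =>
    hpos.mono fun n hn => integrable_sub_pow_gammaMeasure hn (by positivity) t k
  have h8 := tendsto_pow_mul_integral_sub_pow_gammaMeasure ht gammaCentralMoment_eight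
    (Continuous.tendsto (by fun_prop) 0)
  have h10 := tendsto_pow_mul_integral_sub_pow_gammaMeasure ht gammaCentralMoment_ten
    (Continuous.tendsto (by fun_prop) 0)
  rw [zero_mul, mul_zero] at h10
  refine tendsto_mul_integral_of_abs_le
    (hpos.mono fun n hn => integrable_sub_taylorWithinEval_gammaMeasure (n := 7) hf hM hn
      (by positivity) t)
    (hint 8) (hint 10) (.of_forall fun n => by positivity) (fun ε hε => ?_) h8 h10
  simpa only [Even.pow_abs ⟨4, rfl⟩, Even.pow_abs ⟨5, rfl⟩] using
    exists_abs_sub_taylorWithinEval_le (n := 7) hf hM t hε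

/-- Fourth-order randomisation error: for `t > 0` and `f` of class `C⁸` with bounded eighth
derivative, with `b₁(t) = (t²/2) f''(t)`, `b₂(t) = (t⁴/8) f⁽⁴⁾(t) + (t³/3) f⁽³⁾(t)` and
`b₃(t) = (t⁶/48) f⁽⁶⁾(t) + (t⁵/6) f⁽⁵⁾(t) + (t⁴/4) f⁽⁴⁾(t)`,
`n⁴ (∫ f dΓ(n,n/t) - f(t) - b₁(t)/n - b₂(t)/n² - b₃(t)/n³) →
  (t⁸/384) f⁽⁸⁾(t) + (t⁷/24) f⁽⁷⁾(t) + ((13 t⁶)/72) f⁽⁶⁾(t) + (t⁵/5) f⁽⁵⁾(t)`. -/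
theorem gamma_randomisation_fourth_order (t : ℝ) (ht : 0 < t) (f : ℝ → ℝ)
    (hf : ContDiff ℝ 8 f)
    (hf_bdd : ∃ M : ℝ, ∀ x : ℝ, |iteratedDeriv 8 f x| ≤ M) :
    Tendsto (fun n : ℕ =>
        (n : ℝ) ^ 4 *
          ((∫ x, f x ∂(gammaMeasure n ((n : ℝ) / t))) - f t -
            (t ^ 2 / 2 * iteratedDeriv 2 f t) / n -
            (t ^ 4 / 8 * iteratedDeriv 4 f t + t ^ 3 / 3 * iteratedDeriv 3 f t) / n ^ 2 -
            (t ^ 6 / 48 * iteratedDeriv 6 f t + t ^ 5 / 6 * iteratedDeriv 5 f t +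
              t ^ 4 / 4 * iteratedDeriv 4 f t) / n ^ 3))
      atTop
      (nhds (t ^ 8 / 384 * iteratedDeriv 8 f t + t ^ 7 / 24 * iteratedDeriv 7 f t +
        13 * t ^ 6 / 72 * iteratedDeriv 6 f t + t ^ 5 / 5 * iteratedDeriv 5 f t)) := by
  obtain ⟨M, hM⟩ := hf_bdd
  have hexpansion := tendsto_natCast_pow_mul_inv
    (sum_taylor_mul_gammaCentralMoment_eight (fun k => iteratedDeriv k f t) t)
    (Continuous.tendsto (by fun_prop) 0)
  have hremainder := tendsto_pow_mul_integral_sub_taylorWithinEval_eight ht hf hM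
  refine ((hexpansion.add hremainder).congr' ?_).mono_right (le_of_eq (congrArg 𝓝 ?_))
  · filter_upwards [(tendsto_natCast_atTop_atTop (R := ℝ)).eventually_gt_atTop 0] with n hn
    have hT := integrable_taylorWithinEval_gammaMeasure hn (div_pos hn ht) f 8 univ t
    have hR := integrable_sub_taylorWithinEval_gammaMeasure (n := 7) hf hM hn (div_pos hn ht) t
    rw [← integral_taylorWithinEval_gammaMeasure_div hn ht, iteratedDeriv_zero,
      integral_sub ((hT.add hR).congr (ae_of_all _ fun x => add_sub_cancel _ _)) hT]
    simp only [div_eq_mul_inv, inv_pow]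
    ring
  · simp
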